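/- For J > 1, with ρ_c = 2/(J+1), ρ_e = 4J/(J+1)², and f(ρ) = ρ(1-ρ)^J, the function γ_J(ρ) = ρ²(1-ρ)(ρ - ρ_e) / (J(ρ - ρ_c)²) satisfies, for ρ ∈ (ρ_c, 1), the ODE γ'(ρ) = (f''(ρ)γ(ρ)² + (f(ρ) + 2ρ f'(ρ))γ(ρ) + ρ² f(ρ)) / (ρ f(ρ)). -/

import Mathlib

noncomputable def fJ (J : ℝ) : ℝ → ℝ := fun ρ => ρ * (1 - ρ) ^ J

noncomputable def gammaJ (J : ℝ) : ℝ → ℝ := fun ρ =>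
  ρ ^ 2 * (1 - ρ) * (ρ - 4 * J / (J + 1) ^ 2) / (J * (ρ - 2 / (J + 1)) ^ 2)

/-!
Away from `ρ = 1` the flux and its first two derivatives are `(1 - ρ) ^ J` times rational
functions: `f' = (1 - ρ) ^ (J - 1) * (1 - (J + 1) ρ)` and
`f'' = J (1 - ρ) ^ (J - 2) * ((J + 1) ρ - 2)`. On the right-hand side of the ODE the factor
`(1 - ρ) ^ J` therefore cancels, and the claim becomes an identity of rational functions in
`ρ` and `J`, valid wherever `ρ`, `1 - ρ` and `(J + 1) ρ - 2` are nonzero.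
-/

theorem hasDerivAt_one_sub_rpow (p : ℝ) {x : ℝ} (hx : x ≠ 1) :
    HasDerivAt (fun y : ℝ => (1 - y) ^ p) (-(p * (1 - x) ^ (p - 1))) x := by
  have h := (Real.hasDerivAt_rpow_const (p := p) (Or.inl (sub_ne_zero.2 hx.symm))).comp x
    ((hasDerivAt_id' x).const_sub 1)
  simpa [Function.comp_def] using h

theorem hasDerivAt_fJ (J : ℝ) {x : ℝ} (hx : x ≠ 1) :
    HasDerivAt (fJ J) ((1 - x) ^ (J - 1) * (1 - (J + 1) * x)) x := by
  have hsplit : (1 - x) ^ J = (1 - x) ^ (J - 1) * (1 - x) := by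
    rw [← Real.rpow_add_one (sub_ne_zero.2 hx.symm), sub_add_cancel]
  refine ((hasDerivAt_id' x).mul (hasDerivAt_one_sub_rpow J hx)).congr_deriv ?_
  rw [hsplit]
  ring

theorem hasDerivAt_deriv_fJ (J : ℝ) {x : ℝ} (hx : x ≠ 1) :
    HasDerivAt (deriv (fJ J)) (J * (1 - x) ^ (J - 2) * ((J + 1) * x - 2)) x := by
  have hderiv : deriv (fJ J) =ᶠ[nhds x] fun y => (1 - y) ^ (J - 1) * (1 - (J + 1) * y) := by
    filter_upwards [isOpen_ne.mem_nhds hx] with y hy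
    exact (hasDerivAt_fJ J hy).deriv
  have hsplit : (1 - x) ^ (J - 1) = (1 - x) ^ (J - 2) * (1 - x) := by
    rw [← Real.rpow_add_one (sub_ne_zero.2 hx.symm)]
    ring_nf
  refine HasDerivAt.congr_of_eventuallyEq ?_ hderiv
  refine ((hasDerivAt_one_sub_rpow (J - 1) hx).mul
    (((hasDerivAt_id' x).const_mul (J + 1)).const_sub 1)).congr_deriv ?_
  rw [show J - 1 - 1 = J - 2 by ring, hsplit]
  ring

theorem hasDerivAt_gammaJ {J x : ℝ} (hJ : J ≠ 0) (hx : x ≠ 2 / (J + 1)) :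
    HasDerivAt (gammaJ J)
      ((((2 * x * (1 - x) - x ^ 2) * (x - 4 * J / (J + 1) ^ 2) + x ^ 2 * (1 - x))
          * (x - 2 / (J + 1)) - 2 * (x ^ 2 * (1 - x) * (x - 4 * J / (J + 1) ^ 2)))
        / (J * (x - 2 / (J + 1)) ^ 3)) x := by
  have hc : x - 2 / (J + 1) ≠ 0 := sub_ne_zero.2 hx
  have hnum : HasDerivAt (fun y : ℝ => y ^ 2 * (1 - y) * (y - 4 * J / (J + 1) ^ 2))
      ((2 * x * (1 - x) - x ^ 2) * (x - 4 * J / (J + 1) ^ 2) + x ^ 2 * (1 - x)) x := by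
    refine (((hasDerivAt_pow 2 x).fun_mul ((hasDerivAt_id' x).const_sub 1)).fun_mul
      ((hasDerivAt_id' x).sub_const (4 * J / (J + 1) ^ 2))).congr_deriv ?_
    ring
  have hden : HasDerivAt (fun y : ℝ => J * (y - 2 / (J + 1)) ^ 2)
      (J * (2 * (x - 2 / (J + 1)))) x := by
    refine ((((hasDerivAt_id' x).sub_const (2 / (J + 1))).pow 2).const_mul J).congr_deriv ?_
    ring
  refine (hnum.div hden (mul_ne_zero hJ (pow_ne_zero 2 hc))).congr_deriv ?_
  field_simp

theorem stmt5 (J : ℝ) (hJ : 1 < J) (ρ : ℝ) (hρ : ρ ∈ Set.Ioo (2 / (J + 1)) (1:ℝ)) :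
    deriv (gammaJ J) ρ =
      (deriv (deriv (fJ J)) ρ * (gammaJ J ρ) ^ 2
        + (fJ J ρ + 2 * ρ * deriv (fJ J) ρ) * gammaJ J ρ
        + ρ ^ 2 * fJ J ρ) / (ρ * fJ J ρ) := by
  obtain ⟨hρc, hρ1⟩ := hρ
  have hJ0 : J ≠ 0 := by positivity
  have hρ0 : ρ ≠ 0 := (lt_trans (by positivity) hρc).ne'
  have h1ρ : 0 < 1 - ρ := sub_pos.2 hρ1
  have hcrit : ρ * (J + 1) - 2 ≠ 0 := by
    rw [div_lt_iff₀ (by positivity)] at hρc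
    linarith
  have hpow : (1 - ρ) ^ J ≠ 0 := (Real.rpow_pos_of_pos h1ρ J).ne'
  have hpow1 : (1 - ρ) ^ (J - 1) = (1 - ρ) ^ J / (1 - ρ) := Real.rpow_sub_one h1ρ.ne' J
  have hpow2 : (1 - ρ) ^ (J - 2) = (1 - ρ) ^ J / (1 - ρ) ^ 2 := by
    rw [Real.rpow_sub h1ρ, Real.rpow_two]
  rw [(hasDerivAt_gammaJ hJ0 hρc.ne').deriv, (hasDerivAt_fJ J hρ1.ne).deriv,
    (hasDerivAt_deriv_fJ J hρ1.ne).deriv]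
  simp only [fJ, gammaJ, hpow1, hpow2]
  field_simp
  ring
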